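/- Divergence-form representation of the determinant: if y : ℝ³ → ℝ³ is twice continuously differentiable, then for every x ∈ ℝ³, det ∇y(x) = (1/3) ∑_{i,j=1}^{3} ∂_j ( y_i (cof ∇y)_{ij} )(x). -/

import Mathlib

open Matrix

/-- Cofactor matrix: the transpose of the adjugate, so that `A * (cof A)ᵀ = det A • 1`. -/
noncomputable def cof (A : Matrix (Fin 3) (Fin 3) ℝ) : Matrix (Fin 3) (Fin 3) ℝ :=
  (Matrix.adjugate A)ᵀ

/-- Jacobian matrix of `y` at `x`: entries `(∇y(x))_{kp} = ∂y_k/∂x_p(x)`. -/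
noncomputable def jac (y : (Fin 3 → ℝ) → Fin 3 → ℝ) (x : Fin 3 → ℝ) :
    Matrix (Fin 3) (Fin 3) ℝ :=
  Matrix.of fun k p => fderiv ℝ y x (Pi.single p 1) k

/-- Partial derivative of a scalar function in the `j`-th coordinate direction. -/
noncomputable def pd (j : Fin 3) (f : (Fin 3 → ℝ) → ℝ) (x : Fin 3 → ℝ) : ℝ :=
  fderiv ℝ f x (Pi.single j 1)

/-! By the product rule, `∑_j ∂_j (y_i cof_ij) = ∑_j ∂_j y_i cof_ij + y_i ∑_j ∂_j cof_ij`.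
The first sum is the Laplace expansion of `det ∇y` along row `i`. The second vanishes by the
Piola identity `∑_j ∂_j (cof ∇y)_ij = 0`: writing `cof_ij` as a 2×2 minor of `∇y`, its divergence
cancels in pairs thanks to the symmetry `∂_j ∂_p y_k = ∂_p ∂_j y_k` of second derivatives.
Summing over `i` gives `3 det ∇y`. -/

lemma cof_apply (A : Matrix (Fin 3) (Fin 3) ℝ) (i j : Fin 3) :
    cof A i j = A (i + 1) (j + 1) * A (i + 2) (j + 2) - A (i + 1) (j + 2) * A (i + 2) (j + 1) := by
  fin_cases i <;> fin_cases j <;> simp [cof, adjugate_fin_three] <;> ring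

lemma sum_mul_cof_row (A : Matrix (Fin 3) (Fin 3) ℝ) (i : Fin 3) :
    ∑ j, A i j * cof A i j = A.det := by
  simpa [mul_apply, cof, one_apply] using congrFun (congrFun (mul_adjugate A) i) i

/-- `D j` plays the role of `∂_j A`; its symmetry `D j k p = D p k j` is the symmetry of second
derivatives when `A` is a Jacobian matrix. -/
lemma sum_cof_variation_eq_zero (A : Matrix (Fin 3) (Fin 3) ℝ) (D : Fin 3 → Matrix (Fin 3) (Fin 3) ℝ)
    (hD : ∀ j k p, D j k p = D p k j) (i : Fin 3) :
    ∑ j, (D j (i + 1) (j + 1) * A (i + 2) (j + 2) + A (i + 1) (j + 1) * D j (i + 2) (j + 2)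
      - (D j (i + 1) (j + 2) * A (i + 2) (j + 1) + A (i + 1) (j + 2) * D j (i + 2) (j + 1))) = 0 := by
  simp only [Fin.sum_univ_three, Fin.reduceAdd]
  linear_combination A (i + 2) 2 * hD 0 (i + 1) 1 + A (i + 1) 1 * hD 0 (i + 2) 2
    - A (i + 2) 1 * hD 0 (i + 1) 2 - A (i + 1) 2 * hD 0 (i + 2) 1
    + A (i + 2) 0 * hD 1 (i + 1) 2 - A (i + 1) 0 * hD 1 (i + 2) 2

section

variable {f g : (Fin 3 → ℝ) → ℝ} {y : (Fin 3 → ℝ) → Fin 3 → ℝ} {x : Fin 3 → ℝ}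

lemma pd_mul (hf : DifferentiableAt ℝ f x) (hg : DifferentiableAt ℝ g x) (j : Fin 3) :
    pd j (fun z => f z * g z) x = pd j f x * g x + f x * pd j g x := by
  simp only [pd, fderiv_fun_mul hf hg, _root_.add_apply, _root_.smul_apply,
    smul_eq_mul]
  ring

lemma pd_sub (hf : DifferentiableAt ℝ f x) (hg : DifferentiableAt ℝ g x) (j : Fin 3) :
    pd j (fun z => f z - g z) x = pd j f x - pd j g x := by
  simp [pd, fderiv_fun_sub hf hg]

lemma pd_apply (hy : DifferentiableAt ℝ y x) (i j : Fin 3) :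
    pd j (fun z => y z i) x = jac y x i j := by
  simp [pd, jac, fderiv_apply hy]

noncomputable def entryCLM (k p : Fin 3) : ((Fin 3 → ℝ) →L[ℝ] Fin 3 → ℝ) →L[ℝ] ℝ :=
  (ContinuousLinearMap.proj k).comp (ContinuousLinearMap.apply ℝ (Fin 3 → ℝ) (Pi.single p 1))

lemma jac_apply_eq_comp (k p : Fin 3) : (fun z => jac y z k p) = entryCLM k p ∘ fderiv ℝ y :=
  rfl

lemma contDiff_jac_apply {n : WithTop ℕ∞} (hy : ContDiff ℝ (n + 1) y) (k p : Fin 3) :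
    ContDiff ℝ n fun z => jac y z k p := by
  rw [jac_apply_eq_comp]
  exact (entryCLM k p).contDiff.comp (hy.fderiv_right le_rfl)

lemma differentiable_jac_apply (hy : ContDiff ℝ 2 y) (k p : Fin 3) :
    Differentiable ℝ fun z => jac y z k p :=
  (contDiff_jac_apply (n := 1) hy k p).differentiable one_ne_zero

lemma pd_jac_apply (hd : DifferentiableAt ℝ (fderiv ℝ y) x) (k p j : Fin 3) :
    pd j (fun z => jac y z k p) x = fderiv ℝ (fderiv ℝ y) x (Pi.single j 1) (Pi.single p 1) k := by
  rw [pd, jac_apply_eq_comp, ((entryCLM k p).hasFDerivAt.comp x hd.hasFDerivAt).fderiv]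
  rfl

lemma pd_jac_apply_comm (hy : ContDiff ℝ 2 y) (k p j : Fin 3) :
    pd j (fun z => jac y z k p) x = pd p (fun z => jac y z k j) x := by
  have hd : DifferentiableAt ℝ (fderiv ℝ y) x :=
    (hy.fderiv_right (m := 1) le_rfl).differentiable one_ne_zero x
  rw [pd_jac_apply hd, pd_jac_apply hd,
    hy.contDiffAt.isSymmSndFDerivAt (by simp) (Pi.single j 1) (Pi.single p 1)]

lemma differentiableAt_cof_apply {M : (Fin 3 → ℝ) → Matrix (Fin 3) (Fin 3) ℝ}
    (hM : ∀ k p, DifferentiableAt ℝ (fun z => M z k p) x) (i j : Fin 3) :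
    DifferentiableAt ℝ (fun z => cof (M z) i j) x := by
  simp only [cof_apply]
  exact ((hM _ _).mul (hM _ _)).sub ((hM _ _).mul (hM _ _))

lemma pd_cof_apply {M : (Fin 3 → ℝ) → Matrix (Fin 3) (Fin 3) ℝ}
    (hM : ∀ k p, DifferentiableAt ℝ (fun z => M z k p) x) (i j l : Fin 3) :
    pd l (fun z => cof (M z) i j) x =
      pd l (fun z => M z (i + 1) (j + 1)) x * M x (i + 2) (j + 2)
        + M x (i + 1) (j + 1) * pd l (fun z => M z (i + 2) (j + 2)) x
      - (pd l (fun z => M z (i + 1) (j + 2)) x * M x (i + 2) (j + 1)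
        + M x (i + 1) (j + 2) * pd l (fun z => M z (i + 2) (j + 1)) x) := by
  simp_rw [cof_apply]
  rw [pd_sub ((hM _ _).fun_mul (hM _ _)) ((hM _ _).fun_mul (hM _ _)),
    pd_mul (hM _ _) (hM _ _), pd_mul (hM _ _) (hM _ _)]

theorem sum_pd_cof_jac_eq_zero (hy : ContDiff ℝ 2 y) (i : Fin 3) :
    ∑ j, pd j (fun z => cof (jac y z) i j) x = 0 := by
  simp_rw [pd_cof_apply (fun k p => (differentiable_jac_apply hy k p).differentiableAt)]
  exact sum_cof_variation_eq_zero (jac y x) (fun j => of fun k p => pd j (fun z => jac y z k p) x)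
    (fun j k p => pd_jac_apply_comm hy k p j) i

lemma sum_pd_mul_cof_jac (hy : ContDiff ℝ 2 y) (i : Fin 3) :
    ∑ j, pd j (fun z => y z i * cof (jac y z) i j) x = (jac y x).det := by
  have hyi : DifferentiableAt ℝ (fun z => y z i) x :=
    differentiableAt_pi.1 (hy.differentiable two_ne_zero x) i
  have hcof (j : Fin 3) : DifferentiableAt ℝ (fun z => cof (jac y z) i j) x :=
    differentiableAt_cof_apply (fun k p => (differentiable_jac_apply hy k p).differentiableAt) i j
  simp_rw [pd_mul hyi (hcof _), pd_apply (hy.differentiable two_ne_zero x), Finset.sum_add_distrib,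
    ← Finset.mul_sum, sum_pd_cof_jac_eq_zero hy, sum_mul_cof_row, mul_zero, add_zero]

end

/-- Divergence-form representation of the determinant:
`det ∇y(x) = (1/3) ∑_{i,j} ∂_j (y_i (cof ∇y)_{ij})(x)` for a C² map `y`. -/
theorem det_jac_eq_div_form (y : (Fin 3 → ℝ) → Fin 3 → ℝ) (hy : ContDiff ℝ 2 y)
    (x : Fin 3 → ℝ) :
    (jac y x).det =
      (1 / 3) * ∑ i : Fin 3, ∑ j : Fin 3,
        pd j (fun z => y z i * cof (jac y z) i j) x := by
  simp_rw [sum_pd_mul_cof_jac hy, Finset.sum_const, Finset.card_univ, Fintype.card_fin]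
  ring
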